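/- arXiv:2512.14907 — 4 statements merged into one kernel-verified Lean document; each statement's English description precedes it below -/
import Mathlib

section
/- For every squarefree positive integer r, one has -r ∑_{d|r} (μ(d)/d) log d = φ(r) ∑_{p|r} (log p)/(p-1), where the last sum ranges over prime divisors p of r. -/
open ArithmeticFunction Real

/-!
The divisors of the squarefree `r` are the products `d = ∏ p ∈ t, p` over `t ⊆ r.primeFactors`,
and `μ(d)/d · log d = (∏ p ∈ t, -p⁻¹) · ∑ p ∈ t, log p`. Summing `(∏ t, a) · (∑ t, b)` over all
subsets `t` of a finite set `s` gives `(∏ s, (1 + a)) · ∑ s, a b / (1 + a)`, as one sees by adding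
one element at a time; with `a p = -p⁻¹` the product is `φ(r)/r`, and each summand becomes
`-log p / (p - 1)`.
-/

theorem Finset.sum_powerset_prod_mul_sum {ι K : Type*} [DecidableEq ι] [Field K]
    (s : Finset ι) (a b : ι → K) (ha : ∀ i ∈ s, 1 + a i ≠ 0) :
    ∑ t ∈ s.powerset, (∏ i ∈ t, a i) * ∑ i ∈ t, b i =
      (∏ i ∈ s, (1 + a i)) * ∑ i ∈ s, a i * b i / (1 + a i) := by
  induction s using Finset.induction_on with
  | empty => simp
  | insert x s hx ih =>
    have hax := ha x (mem_insert_self x s)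
    have hinsert : ∀ t ∈ s.powerset, (∏ i ∈ insert x t, a i) * ∑ i ∈ insert x t, b i =
        a x * ((∏ i ∈ t, a i) * ∑ i ∈ t, b i) + a x * b x * ∏ i ∈ t, a i := by
      intro t ht
      have hxt : x ∉ t := fun h => hx (mem_powerset.mp ht h)
      rw [prod_insert hxt, sum_insert hxt]
      ring
    rw [sum_powerset_insert hx, sum_congr rfl hinsert, sum_add_distrib, ← mul_sum, ← mul_sum,
      ← prod_one_add, ih fun i hi => ha i (mem_insert_of_mem hi), prod_insert hx, sum_insert hx]
    field_simp
    ring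

theorem Nat.sum_divisors_eq_sum_powerset_primeFactors {M : Type*} [AddCommMonoid M] {n : ℕ}
    (hn : Squarefree n) (f : ℕ → M) :
    ∑ d ∈ n.divisors, f d = ∑ t ∈ n.primeFactors.powerset, f (∏ p ∈ t, p) := by
  rw [← divisors_filter_squarefree_of_squarefree hn, sum_divisors_filter_squarefree hn.ne_zero,
    factors_eq, List.toFinset_coe, toFinset_factors]
  simp only [Finset.prod_val, id]

theorem Nat.prod_primeFactors_one_sub_inv {K : Type*} [Field K] [CharZero K] {n : ℕ}
    (hn : n ≠ 0) : ∏ p ∈ n.primeFactors, (1 - (p : K)⁻¹) = totient n / n := by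
  have h := congrArg (fun q : ℚ => (q : K)) (totient_eq_mul_prod_factors n)
  push_cast at h
  rw [h, mul_div_cancel_left₀ _ (cast_ne_zero.mpr hn)]

theorem moebius_div_mul_log_prod_primes {t : Finset ℕ} (ht : ∀ p ∈ t, p.Prime) :
    (moebius (∏ p ∈ t, p) : ℝ) / (∏ p ∈ t, p : ℕ) * Real.log (∏ p ∈ t, p : ℕ) =
      (∏ p ∈ t, -(p : ℝ)⁻¹) * ∑ p ∈ t, Real.log p := by
  have hp0 : ∀ p ∈ t, (p : ℝ) ≠ 0 := fun p hp => Nat.cast_ne_zero.mpr (ht p hp).ne_zero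
  rw [isMultiplicative_moebius.map_prod_of_prime t ht, Nat.cast_prod, Real.log_prod hp0,
    Int.cast_prod, ← Finset.prod_div_distrib]
  congr 1
  refine Finset.prod_congr rfl fun p hp => ?_
  rw [moebius_apply_prime (ht p hp)]
  simp [neg_div]

theorem stmt_0_general (r : ℕ) (hsq : Squarefree r) :
    -(r : ℝ) * ∑ d ∈ r.divisors, ((moebius d : ℝ) / d) * Real.log d =
      (Nat.totient r : ℝ) * ∑ p ∈ r.primeFactors, Real.log p / ((p : ℝ) - 1) := by
  have hprime : ∀ p ∈ r.primeFactors, p.Prime := fun p => Nat.prime_of_mem_primeFactors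
  have hp0 : ∀ p ∈ r.primeFactors, (p : ℝ) ≠ 0 := fun p hp =>
    Nat.cast_ne_zero.mpr (hprime p hp).ne_zero
  have hp1 : ∀ p ∈ r.primeFactors, (p : ℝ) - 1 ≠ 0 := fun p hp =>
    sub_ne_zero.mpr (by exact_mod_cast (hprime p hp).one_lt.ne')
  have hinv : ∀ p ∈ r.primeFactors, 1 + -(p : ℝ)⁻¹ ≠ 0 := fun p hp => by
    rw [← sub_eq_add_neg, sub_ne_zero, ne_comm, inv_ne_one]
    exact_mod_cast (hprime p hp).ne_one
  rw [Nat.sum_divisors_eq_sum_powerset_primeFactors hsq, Finset.sum_congr rfl fun t ht =>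
      moebius_div_mul_log_prod_primes fun p hp => hprime p (Finset.mem_powerset.mp ht hp),
    Finset.sum_powerset_prod_mul_sum _ _ _ hinv]
  simp_rw [← sub_eq_add_neg]
  rw [Nat.prod_primeFactors_one_sub_inv hsq.ne_zero, Finset.mul_sum, Finset.mul_sum,
    Finset.mul_sum]
  refine Finset.sum_congr rfl fun p hp => ?_
  field_simp [hp0 p hp, hp1 p hp, Nat.cast_ne_zero.mpr hsq.ne_zero]

theorem stmt_0 (r : ℕ) (hr : 0 < r) (hsq : Squarefree r) :
    -(r : ℝ) * ∑ d ∈ r.divisors, ((moebius d : ℝ) / d) * Real.log d =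
      (Nat.totient r : ℝ) * ∑ p ∈ r.primeFactors, Real.log p / ((p : ℝ) - 1) :=
  stmt_0_general r hsq
end

section
/- Define φ'(r) := r ∑_{d|r} (μ(d)/d) log(r/d). Then for all positive integers r, φ'(r) = φ(r) (log r + ∑_{p|r} (log p)/(p-1)). -/
open ArithmeticFunction Real

/-- φ'(r) := r ∑_{d|r} (μ(d)/d) log(r/d). -/
noncomputable def phi' (r : ℕ) : ℝ :=
  (r : ℝ) * ∑ d ∈ r.divisors, ((moebius d : ℝ) / d) * Real.log ((r : ℝ) / d)

lemma divisors_prime_mul {p m : ℕ} (hp : p.Prime) (hm : m ≠ 0) (hpm : ¬ p ∣ m) :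
    (p * m).divisors = m.divisors ∪ m.divisors.image (p * ·) := by
  ext d
  simp only [Nat.mem_divisors, Finset.mem_union, Finset.mem_image]
  constructor
  · rintro ⟨hd, -⟩
    by_cases hpd : p ∣ d
    · obtain ⟨e, rfl⟩ := hpd
      right
      refine ⟨e, ⟨?_, hm⟩, rfl⟩
      exact (mul_dvd_mul_iff_left hp.pos.ne').mp hd
    · left
      exact ⟨(Nat.Coprime.dvd_of_dvd_mul_left
        ((Nat.coprime_comm.mp (hp.coprime_iff_not_dvd.mpr hpd))) hd), hm⟩
  · rintro (⟨hd, -⟩ | ⟨e, ⟨he, -⟩, rfl⟩)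
    · exact ⟨hd.mul_left p, mul_ne_zero hp.pos.ne' hm⟩
    · exact ⟨mul_dvd_mul_left p he, mul_ne_zero hp.pos.ne' hm⟩

lemma key (s : Finset ℕ) (hs : ∀ p ∈ s, Nat.Prime p) (c : ℝ) :
    ∑ d ∈ (∏ p ∈ s, p).divisors, ((moebius d : ℝ) / d) * (c - Real.log d) =
      (∏ p ∈ s, (1 - (p : ℝ)⁻¹)) * (c + ∑ p ∈ s, Real.log p / ((p : ℝ) - 1)) := by
  induction s using Finset.induction_on generalizing c with
  | empty => simp
  | @insert p s hps ih =>
    have hp : Nat.Prime p := hs p (Finset.mem_insert_self p s)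
    have hs' : ∀ q ∈ s, Nat.Prime q := fun q hq => hs q (Finset.mem_insert_of_mem hq)
    set m : ℕ := ∏ q ∈ s, q with hm_def
    have hm : m ≠ 0 := Finset.prod_ne_zero_iff.mpr fun q hq => (hs' q hq).pos.ne'
    have hpm : ¬ p ∣ m := by
      intro h
      have hmem : p ∈ m.primeFactors := Nat.mem_primeFactors.mpr ⟨hp, h, hm⟩
      rw [hm_def, Nat.primeFactors_prod hs'] at hmem
      exact hps hmem
    rw [Finset.prod_insert hps, divisors_prime_mul hp hm hpm, Finset.sum_union, Finset.sum_image]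
    · have hinner : ∀ d ∈ m.divisors,
          ((moebius (p * d) : ℝ) / ((p * d : ℕ) : ℝ)) * (c - Real.log ((p * d : ℕ) : ℝ)) =
            -(p : ℝ)⁻¹ * (((moebius d : ℝ) / d) * ((c - Real.log p) - Real.log d)) := by
        intro d hd
        have hd0 : d ≠ 0 := Nat.pos_of_mem_divisors hd |>.ne'
        have hpd : ¬ p ∣ d := fun h => hpm (h.trans (Nat.dvd_of_mem_divisors hd))
        have hcop : Nat.Coprime p d := hp.coprime_iff_not_dvd.mpr hpd
        rw [isMultiplicative_moebius.map_mul_of_coprime hcop,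
          moebius_apply_prime hp]
        push_cast
        rw [Real.log_mul (by exact_mod_cast hp.pos.ne') (by exact_mod_cast hd0)]
        simp only [div_eq_mul_inv, mul_inv]
        ring
      rw [Finset.sum_congr rfl hinner, ← Finset.mul_sum, ih hs', ih hs']
      rw [Finset.prod_insert hps, Finset.sum_insert hps]
      have hp1 : (1 : ℝ) < p := by exact_mod_cast hp.one_lt
      have hp0 : (p : ℝ) ≠ 0 := by positivity
      have hp1' : (p : ℝ) - 1 ≠ 0 := by linarith
      field_simp
      ring
    · intro x hx y _ h
      exact Nat.eq_of_mul_eq_mul_left hp.pos h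
    · rw [Finset.disjoint_right]
      rintro d hd hd'
      obtain ⟨e, -, rfl⟩ := Finset.mem_image.mp hd
      exact hpm ((Dvd.intro e rfl).trans (Nat.dvd_of_mem_divisors hd'))

theorem stmt_1 (r : ℕ) (hr : 0 < r) :
    phi' r =
      (Nat.totient r : ℝ) *
        (Real.log r + ∑ p ∈ r.primeFactors, Real.log p / ((p : ℝ) - 1)) := by
  have hr0 : r ≠ 0 := hr.ne'
  set R : ℕ := ∏ p ∈ r.primeFactors, p with hR_def
  have hRr : R ∣ r := Nat.prod_primeFactors_dvd r
  -- rewrite summand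
  have hsum : ∀ d ∈ r.divisors,
      ((moebius d : ℝ) / d) * Real.log ((r : ℝ) / d) =
        ((moebius d : ℝ) / d) * (Real.log r - Real.log d) := by
    intro d hd
    rw [Real.log_div (by exact_mod_cast hr0) (by exact_mod_cast (Nat.pos_of_mem_divisors hd).ne')]
  -- restrict to divisors of R
  have hsub : R.divisors ⊆ r.divisors := Nat.divisors_subset_of_dvd hr0 hRr
  have hrestrict :
      ∑ d ∈ r.divisors, ((moebius d : ℝ) / d) * (Real.log r - Real.log d) =
        ∑ d ∈ R.divisors, ((moebius d : ℝ) / d) * (Real.log r - Real.log d) := by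
    refine (Finset.sum_subset hsub ?_).symm
    intro d hd hdR
    have : ¬ Squarefree d := by
      intro hsq
      apply hdR
      rw [Nat.mem_divisors]
      refine ⟨?_, Finset.prod_ne_zero_iff.mpr fun q hq => (Nat.prime_of_mem_primeFactors hq).pos.ne'⟩
      calc d = ∏ p ∈ d.primeFactors, p := (Nat.prod_primeFactors_of_squarefree hsq).symm
        _ ∣ R := Finset.prod_dvd_prod_of_subset _ _ _
            (Nat.primeFactors_mono (Nat.dvd_of_mem_divisors hd) hr0)
    rw [moebius_eq_zero_of_not_squarefree this]
    simp
  have hkey := key r.primeFactors (fun p hp => Nat.prime_of_mem_primeFactors hp) (Real.log r)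
  -- totient formula over ℝ
  have htot : (Nat.totient r : ℝ) = (r : ℝ) * ∏ p ∈ r.primeFactors, (1 - (p : ℝ)⁻¹) := by
    have := Nat.totient_eq_mul_prod_factors r
    have h2 : ((Nat.totient r : ℚ) : ℝ) = (((r : ℚ) * ∏ p ∈ r.primeFactors, (1 - (p : ℚ)⁻¹)) : ℚ) := by
      exact_mod_cast congrArg (fun q : ℚ => (q : ℝ)) this
    push_cast at h2
    exact_mod_cast h2
  rw [phi', Finset.sum_congr rfl hsum, hrestrict, hR_def, hkey, htot]
  ring
end

section
/- Let x ≥ 2 and define Λ_x(y) = log y for 1 ≤ y ≤ x, Λ_x(y) = (log y)(log²(x³/y) − 2 log²(x²/y))/(2 log² x) for x ≤ y ≤ x², and Λ_x(y) = (log y) log²(x³/y)/(2 log² x) for x² ≤ y ≤ x³. Then (1/log⁴ x) ∫_1^{x³} Λ_x(y)² log²(xy)/(y log y) dy = 17/12 + 6899/1120 + 3679/3360 + o(1) < 8.68 as x → ∞. -/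
open Real Filter


lemma integral_poly_log (a b : ℝ) (ha : 0 < a) (hab : a ≤ b)
    (c1 c2 c3 c4 c5 c6 c7 c8 : ℝ) (f : ℝ → ℝ)
    (hf : ∀ y ∈ Set.Icc a b, f y =
      (c1 + 2*c2*Real.log y + 3*c3*(Real.log y)^2 + 4*c4*(Real.log y)^3 + 5*c5*(Real.log y)^4
        + 6*c6*(Real.log y)^5 + 7*c7*(Real.log y)^6 + 8*c8*(Real.log y)^7) / y) :
    (∫ y in a..b, f y) =
      (c1*Real.log b + c2*(Real.log b)^2 + c3*(Real.log b)^3 + c4*(Real.log b)^4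
        + c5*(Real.log b)^5 + c6*(Real.log b)^6 + c7*(Real.log b)^7 + c8*(Real.log b)^8)
      - (c1*Real.log a + c2*(Real.log a)^2 + c3*(Real.log a)^3 + c4*(Real.log a)^4
        + c5*(Real.log a)^5 + c6*(Real.log a)^6 + c7*(Real.log a)^7 + c8*(Real.log a)^8)
      ∧ IntervalIntegrable f MeasureTheory.volume a b := by
  have huIcc : Set.uIcc a b = Set.Icc a b := Set.uIcc_of_le hab
  set g : ℝ → ℝ := fun y => (c1 + 2*c2*Real.log y + 3*c3*(Real.log y)^2 + 4*c4*(Real.log y)^3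
      + 5*c5*(Real.log y)^4 + 6*c6*(Real.log y)^5 + 7*c7*(Real.log y)^6 + 8*c8*(Real.log y)^7) / y
    with hgdef
  have h0 : ∀ y ∈ Set.uIcc a b, y ≠ 0 := by
    intro y hy
    rw [huIcc] at hy
    exact (lt_of_lt_of_le ha hy.1).ne'
  have hl : ContinuousOn Real.log (Set.uIcc a b) :=
    Real.continuousOn_log.mono (by intro y hy; simpa using h0 y hy)
  have hgc : ContinuousOn g (Set.uIcc a b) := by
    apply ContinuousOn.div _ continuousOn_id h0
    exact ((((((continuousOn_const.add (continuousOn_const.mul hl)).add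
      (continuousOn_const.mul (hl.pow 2))).add (continuousOn_const.mul (hl.pow 3))).add
      (continuousOn_const.mul (hl.pow 4))).add (continuousOn_const.mul (hl.pow 5))).add
      (continuousOn_const.mul (hl.pow 6))).add (continuousOn_const.mul (hl.pow 7))
  have hEq : Set.EqOn f g (Set.uIcc a b) := by
    intro y hy
    exact hf y (huIcc ▸ hy)
  have hderiv : ∀ y ∈ Set.uIcc a b, HasDerivAt (fun y => c1*(Real.log y)^1 + c2*(Real.log y)^2
      + c3*(Real.log y)^3 + c4*(Real.log y)^4 + c5*(Real.log y)^5 + c6*(Real.log y)^6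
      + c7*(Real.log y)^7 + c8*(Real.log y)^8) (g y) y := by
    intro y hy
    have hy0 := h0 y hy
    have h := fun (n : ℕ) (c : ℝ) => (hasDerivAt_pow n (Real.log y)).const_mul c
    have hp : HasDerivAt (fun t : ℝ => c1*t^1 + c2*t^2 + c3*t^3 + c4*t^4 + c5*t^5 + c6*t^6
        + c7*t^7 + c8*t^8)
        (c1 + 2*c2*(Real.log y) + 3*c3*(Real.log y)^2 + 4*c4*(Real.log y)^3
          + 5*c5*(Real.log y)^4 + 6*c6*(Real.log y)^5 + 7*c7*(Real.log y)^6
          + 8*c8*(Real.log y)^7) (Real.log y) := by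
      have H := (((((((h 1 c1).add (h 2 c2)).add (h 3 c3)).add (h 4 c4)).add (h 5 c5)).add
        (h 6 c6)).add (h 7 c7)).add (h 8 c8)
      refine H.congr_deriv ?_
      push_cast
      ring
    have := hp.comp y (Real.hasDerivAt_log hy0)
    simpa [hgdef, Function.comp_def, div_eq_mul_inv] using this
  have hint_g : IntervalIntegrable g MeasureTheory.volume a b := hgc.intervalIntegrable
  have hint_f : IntervalIntegrable f MeasureTheory.volume a b := by
    apply hint_g.congr
    intro y hy
    exact (hEq (Set.uIoc_subset_uIcc hy)).symm
  refine ⟨?_, hint_f⟩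
  rw [intervalIntegral.integral_congr hEq,
    intervalIntegral.integral_eq_sub_of_hasDerivAt hderiv hint_g]
  ring

/-- Continuous analogue of the smoothed von Mangoldt weight, with Λ(y) replaced by log y. -/
noncomputable def LambdaC (x y : ℝ) : ℝ :=
  if y ≤ x then Real.log y
  else if y ≤ x ^ 2 then
    Real.log y * ((Real.log (x ^ 3 / y)) ^ 2 - 2 * (Real.log (x ^ 2 / y)) ^ 2)
      / (2 * (Real.log x) ^ 2)
  else Real.log y * (Real.log (x ^ 3 / y)) ^ 2 / (2 * (Real.log x) ^ 2)

set_option maxHeartbeats 2000000 in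
theorem stmt_11 :
    Tendsto (fun x : ℝ =>
        (1 / (Real.log x) ^ 4) *
          ∫ y in (1 : ℝ)..(x ^ 3), (LambdaC x y) ^ 2 * (Real.log (x * y)) ^ 2 / (y * Real.log y))
      atTop (nhds ((17 : ℝ) / 12 + 6899 / 1120 + 3679 / 3360)) ∧
    ((17 : ℝ) / 12 + 6899 / 1120 + 3679 / 3360) < 8.68 := by
  constructor
  · apply tendsto_const_nhds.congr'
    filter_upwards [eventually_ge_atTop (2 : ℝ)] with x hx
    have hx1 : (1 : ℝ) < x := by linarith
    have hx0 : (0 : ℝ) < x := by linarith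
    have hL : 0 < Real.log x := Real.log_pos hx1
    have hxx2 : x ≤ x ^ 2 := by nlinarith
    have hx23 : x ^ 2 ≤ x ^ 3 := by nlinarith
    have hxlt2 : x < x ^ 2 := by nlinarith
    have hlx2 : Real.log (x ^ 2) = 2 * Real.log x := by
      rw [Real.log_pow]; push_cast; ring
    have hlx3 : Real.log (x ^ 3) = 3 * Real.log x := by
      rw [Real.log_pow]; push_cast; ring
    set F : ℝ → ℝ := fun y => (LambdaC x y) ^ 2 * (Real.log (x * y)) ^ 2 / (y * Real.log y)
      with hFdef
    -- Piece 1 : [1, x]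
    have P1 := integral_poly_log 1 x one_pos (le_of_lt hx1)
      0 ((Real.log x)^2/2) (2*(Real.log x)/3) (1/4) 0 0 0 0 F ?_
    -- Piece 2 : [x, x^2]
    have P2 := integral_poly_log x (x^2) hx0 hxx2
      0 ((Real.log x)^2/8) ((Real.log x)/2) (11/16) (1/(5*(Real.log x)))
      (-5/(24*(Real.log x)^2)) (-1/(14*(Real.log x)^3)) (1/(32*(Real.log x)^4)) F ?_
    -- Piece 3 : [x^2, x^3]
    have P3 := integral_poly_log (x^2) (x^3) (by positivity) hx23
      0 (81*(Real.log x)^2/8) (9*(Real.log x)/2) (-81/16) (-3/(5*(Real.log x)))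
      (31/(24*(Real.log x)^2)) (-5/(14*(Real.log x)^3)) (1/(32*(Real.log x)^4)) F ?_
    · obtain ⟨e1, i1⟩ := P1
      obtain ⟨e2, i2⟩ := P2
      obtain ⟨e3, i3⟩ := P3
      have split2 := intervalIntegral.integral_add_adjacent_intervals (μ := MeasureTheory.volume)
        (i1.trans i2) i3
      have split1 := intervalIntegral.integral_add_adjacent_intervals (μ := MeasureTheory.volume)
        i1 i2
      rw [← split2, ← split1, e1, e2, e3, hlx2, hlx3, Real.log_one]
      field_simp
      ring
    -- goal for piece 3
    · intro y hy
      have hy0 : 0 < y := lt_of_lt_of_le (by positivity) hy.1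
      have hyx : ¬ y ≤ x := not_le.mpr (lt_of_lt_of_le hxlt2 hy.1)
      have hly : Real.log (x * y) = Real.log x + Real.log y := Real.log_mul hx0.ne' hy0.ne'
      have hl3y : Real.log (x ^ 3 / y) = 3 * Real.log x - Real.log y := by
        rw [Real.log_div (by positivity) hy0.ne', hlx3]
      have hlypos : 0 < Real.log y :=
        Real.log_pos (lt_of_lt_of_le (by nlinarith : (1:ℝ) < x ^ 2) hy.1)
      by_cases hy2 : y ≤ x ^ 2
      · -- y = x^2
        have hyeq : y = x ^ 2 := le_antisymm hy2 hy.1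
        have hl2y : Real.log (x ^ 2 / y) = 2 * Real.log x - Real.log y := by
          rw [Real.log_div (by positivity) hy0.ne', hlx2]
        simp only [hFdef, LambdaC, if_neg hyx, if_pos hy2]
        rw [hly, hl3y, hl2y, hyeq, hlx2]
        field_simp
        ring
      · simp only [hFdef, LambdaC, if_neg hyx, if_neg hy2]
        rw [hly, hl3y]
        field_simp
        ring
    -- goal for piece 2
    · intro y hy
      have hy0 : 0 < y := lt_of_lt_of_le hx0 hy.1
      have hly : Real.log (x * y) = Real.log x + Real.log y := Real.log_mul hx0.ne' hy0.ne'
      have hlypos : 0 < Real.log y := Real.log_pos (lt_of_lt_of_le hx1 hy.1)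
      by_cases hyx : y ≤ x
      · -- y = x
        have hyeq : y = x := le_antisymm hyx hy.1
        simp only [hFdef, LambdaC, if_pos hyx]
        rw [hly, hyeq]
        field_simp
        ring
      · have hl3y : Real.log (x ^ 3 / y) = 3 * Real.log x - Real.log y := by
          rw [Real.log_div (by positivity) hy0.ne', hlx3]
        have hl2y : Real.log (x ^ 2 / y) = 2 * Real.log x - Real.log y := by
          rw [Real.log_div (by positivity) hy0.ne', hlx2]
        simp only [hFdef, LambdaC, if_neg hyx, if_pos hy.2]
        rw [hly, hl3y, hl2y]
        field_simp
        ring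
    -- goal for piece 1
    · intro y hy
      have hy0 : 0 < y := lt_of_lt_of_le one_pos hy.1
      have hly : Real.log (x * y) = Real.log x + Real.log y := Real.log_mul hx0.ne' hy0.ne'
      simp only [hFdef, LambdaC, if_pos hy.2]
      rw [hly]
      by_cases h0 : Real.log y = 0
      · rw [h0]; ring
      · field_simp
        ring
  · norm_num
end

section
/- Let 0 ≤ Δ and x ≥ 2. Then (1/log⁴ x) ∫_1^{x³} (log y) log²(xy) y^{−1−2Δ/log x} dy ≤ ((2Δ² + 4Δ + 3)e^{6Δ} − 192Δ³ − 80Δ² − 22Δ − 3)/(8Δ⁴ e^{6Δ}) for Δ > 0. -/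
/-!
With `L = log x` and `c = 2Δ / L` the integrand is `log y · (L + log y)² · y^(-1-c)`, which has the
elementary primitive `-y^(-c) P(log y)`, where `P` is the cubic with `c P - P' = t (L + t)²`.
Evaluating between `1` and `x³`, where `y^(-c) = e^(-6Δ)`, gives exactly the right-hand side: the
bound holds with equality.
-/

open Real

noncomputable def antiderivPoly (c L t : ℝ) : ℝ :=
  t ^ 3 / c + (2 * L / c + 3 / c ^ 2) * t ^ 2 + (L ^ 2 / c + 4 * L / c ^ 2 + 6 / c ^ 3) * t
    + (L ^ 2 / c ^ 2 + 4 * L / c ^ 3 + 6 / c ^ 4)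

theorem hasDerivAt_antiderivPoly {c : ℝ} (hc : c ≠ 0) (L t : ℝ) :
    HasDerivAt (antiderivPoly c L) (c * antiderivPoly c L t - t * (L + t) ^ 2) t := by
  have h := ((((hasDerivAt_pow 3 t).div_const c).add
    ((hasDerivAt_pow 2 t).const_mul (2 * L / c + 3 / c ^ 2))).add
    ((hasDerivAt_id' t).const_mul (L ^ 2 / c + 4 * L / c ^ 2 + 6 / c ^ 3))).add_const
    (L ^ 2 / c ^ 2 + 4 * L / c ^ 3 + 6 / c ^ 4)
  refine h.congr_deriv ?_
  unfold antiderivPoly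
  field_simp
  push_cast
  ring

theorem hasDerivAt_rpow_neg_mul_comp_log {Q : ℝ → ℝ} {q c y : ℝ} (hy : 0 < y)
    (hQ : HasDerivAt Q q (log y)) :
    HasDerivAt (fun y => y ^ (-c) * Q (log y)) (y ^ (-1 - c) * (q - c * Q (log y))) y := by
  have hinv : y ^ (-c) * y⁻¹ = y ^ (-1 - c) := by
    rw [← rpow_neg_one, ← rpow_add hy, neg_add_eq_sub]
  have hpow : HasDerivAt (fun y : ℝ => y ^ (-c)) (-c * y ^ (-1 - c)) y :=
    (hasDerivAt_rpow_const (Or.inl hy.ne')).congr_deriv (by rw [show -c - 1 = -1 - c by ring])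
  refine (hpow.mul (hQ.comp y (hasDerivAt_log hy.ne'))).congr_deriv ?_
  rw [← hinv, Function.comp_apply]
  ring

theorem integral_log_mul_log_mul_sq_mul_rpow {x a b c : ℝ} (hx : 0 < x) (ha : 0 < a)
    (hb : 0 < b) (hc : c ≠ 0) :
    ∫ y in a..b, log y * log (x * y) ^ 2 * y ^ (-1 - c)
      = a ^ (-c) * antiderivPoly c (log x) (log a)
        - b ^ (-c) * antiderivPoly c (log x) (log b) := by
  have hpos : ∀ y ∈ Set.uIcc a b, 0 < y := by
    intro y hy
    rcases Set.mem_uIcc.1 hy with h | h <;> linarith [h.1]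
  have hderiv : ∀ y ∈ Set.uIcc a b,
      HasDerivAt (fun y => -(y ^ (-c) * antiderivPoly c (log x) (log y)))
        (log y * log (x * y) ^ 2 * y ^ (-1 - c)) y := by
    intro y hy
    have hy := hpos y hy
    refine (hasDerivAt_rpow_neg_mul_comp_log hy
      (hasDerivAt_antiderivPoly hc (log x) (log y))).neg.congr_deriv ?_
    rw [log_mul hx.ne' hy.ne']
    ring
  have hcont : ContinuousOn (fun y => log y * log (x * y) ^ 2 * y ^ (-1 - c)) (Set.uIcc a b) := by
    intro y hy
    have hy := hpos y hy
    have hxy : x * y ≠ 0 := by positivity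
    apply ContinuousAt.continuousWithinAt
    fun_prop (disch := first | exact hxy | exact hy.ne' | exact Or.inl hy.ne')
  rw [intervalIntegral.integral_eq_sub_of_hasDerivAt hderiv hcont.intervalIntegrable]
  ring

theorem stmt_12 (Δ x : ℝ) (hΔ : 0 < Δ) (hx : 2 ≤ x) :
    (1 / (Real.log x) ^ 4) *
        ∫ y in (1 : ℝ)..(x ^ 3),
          Real.log y * (Real.log (x * y)) ^ 2 * y ^ (-1 - 2 * Δ / Real.log x)
      ≤ ((2 * Δ ^ 2 + 4 * Δ + 3) * Real.exp (6 * Δ)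
            - 192 * Δ ^ 3 - 80 * Δ ^ 2 - 22 * Δ - 3)
          / (8 * Δ ^ 4 * Real.exp (6 * Δ)) := by
  have hx0 : 0 < x := by linarith
  have hL : 0 < log x := log_pos (by linarith)
  have hc : 2 * Δ / log x ≠ 0 := by positivity
  have hrpow : (x ^ 3) ^ (-(2 * Δ / log x)) = (exp (6 * Δ))⁻¹ := by
    rw [rpow_def_of_pos (by positivity), log_pow, ← exp_neg]
    field_simp
    push_cast
    ring_nf
  rw [integral_log_mul_log_mul_sq_mul_rpow hx0 one_pos (by positivity) hc, log_one, one_rpow,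
    log_pow, hrpow]
  apply le_of_eq
  unfold antiderivPoly
  field_simp
  ring
end
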